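/- arXiv:2207.08047 — 2 statements merged into one kernel-verified Lean document; each statement's English description precedes it below -/
import Mathlib

section
/- Let f : [λ, R] → ℝ be a nonneg, increasing, absolutely continuous function with f(λ) ≥ 0, f(r) > 0 for r > λ, satisfying the differential inequality f(r) ≤ C·f'(r)^{n/(n-1)} for a.e. r ∈ (λ, R), where C > 0 and n ≥ 2. Then f(r) ≥ (C^{-(n-1)/n}/n)^n · (r - λ)^n for all r ∈ [λ, R]. -/
/-!
With `p = 1/n` the differential inequality reads `f' ≥ (f/C)^(1-p)`, so `h = f^p` satisfies
`h' = p f^(p-1) f' ≥ p C^(p-1)`, and integrating gives `f r ^ p ≥ p C^(p-1) (r - λ)`.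
To avoid a chain rule for absolutely continuous functions, the bound on `h'` is proved for the
lower right Dini derivative of `h` at every point where `f > 0`: concavity of `x ↦ x^p` and
monotonicity of `f` give `slope h u t ≥ p C^(p-1) (f u / f t)^(1-p)`, and the right-hand side
tends to `p C^(p-1)` as `t → u⁺` by continuity of `f`. Since `f` may vanish at `λ`, the estimate
is proved from every `s > λ` and then passed to the limit `s → λ`.
-/

open MeasureTheory Set Filter Topology

section IntegralRepresentation

variable {f f' : ℝ → ℝ} {a b : ℝ}

theorem continuousOn_of_eq_add_integral (hint : IntervalIntegrable f' volume a b) (hab : a ≤ b)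
    (hFTC : ∀ x ∈ Icc a b, f x = f a + ∫ t in a..x, f' t) : ContinuousOn f (Icc a b) := by
  have h := intervalIntegral.continuousOn_primitive_interval' hint left_mem_uIcc
  rw [uIcc_of_le hab] at h
  exact (continuousOn_const.add h).congr hFTC

theorem sub_eq_integral_of_eq_add_integral (hint : IntervalIntegrable f' volume a b)
    (hFTC : ∀ x ∈ Icc a b, f x = f a + ∫ t in a..x, f' t) {s t : ℝ}
    (hs : s ∈ Icc a b) (ht : t ∈ Icc a b) : f t - f s = ∫ u in s..t, f' u := by
  have hint' : ∀ x ∈ Icc a b, IntervalIntegrable f' volume a x := fun x hx =>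
    hint.mono_set (uIcc_subset_uIcc_left (Icc_subset_uIcc hx))
  rw [hFTC t ht, hFTC s hs, add_sub_add_left_eq_sub,
    intervalIntegral.integral_interval_sub_left (hint' t ht) (hint' s hs)]

theorem ae_hasDerivAt_of_eq_add_integral (hint : IntervalIntegrable f' volume a b)
    (hFTC : ∀ x ∈ Icc a b, f x = f a + ∫ t in a..x, f' t) :
    ∀ᵐ x ∂volume.restrict (Ioo a b), HasDerivAt f (f' x) x := by
  filter_upwards [ae_restrict_of_ae hint.ae_hasDerivAt_integral,
    ae_restrict_mem measurableSet_Ioo] with x hx hxI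
  have hab : a ≤ b := hxI.1.le.trans hxI.2.le
  have hxI' : x ∈ uIcc a b := by rw [uIcc_of_le hab]; exact Ioo_subset_Icc_self hxI
  refine ((hx hxI' a left_mem_uIcc).const_add (f a)).congr_of_eventuallyEq ?_
  filter_upwards [Icc_mem_nhds hxI.1 hxI.2] with y hy using hFTC y hy

theorem ae_nonneg_of_monotoneOn_of_eq_add_integral (hmono : MonotoneOn f (Icc a b))
    (hint : IntervalIntegrable f' volume a b)
    (hFTC : ∀ x ∈ Icc a b, f x = f a + ∫ t in a..x, f' t) :
    ∀ᵐ x ∂volume.restrict (Ioo a b), 0 ≤ f' x := by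
  filter_upwards [ae_hasDerivAt_of_eq_add_integral hint hFTC,
    ae_restrict_mem measurableSet_Ioo] with x hx hxI
  have hacc : AccPt x (𝓟 (Icc a b)) := by
    simpa using (PerfectSpace.univ_preperfect x (mem_univ x)).nhds_inter
      (Icc_mem_nhds hxI.1 hxI.2)
  exact hx.hasDerivWithinAt.nonneg_of_monotoneOn hacc hmono

end IntegralRepresentation

theorem mul_rpow_sub_one_mul_sub_le_rpow_sub_rpow {x y p : ℝ} (hx : 0 ≤ x) (hy : 0 < y)
    (hp0 : 0 ≤ p) (hp1 : p ≤ 1) : p * y ^ (p - 1) * (y - x) ≤ y ^ p - x ^ p := by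
  have hbern := rpow_one_add_le_one_add_mul_self (s := x / y - 1)
    (by linarith [div_nonneg hx hy.le]) hp0 hp1
  rw [add_sub_cancel, Real.div_rpow hx hy.le, div_le_iff₀ (by positivity)] at hbern
  have : y ^ (p - 1) * y = y ^ p := by rw [Real.rpow_sub_one hy.ne', div_mul_cancel₀ _ hy.ne']
  have : y ^ (p - 1) * x = y ^ p * (x / y) := by
    rw [Real.rpow_sub_one hy.ne']; field_simp
  nlinarith

theorem mul_sub_le_sub_of_lt_slope {g : ℝ → ℝ} {a b K : ℝ} (hab : a ≤ b)
    (hg : ContinuousOn g (Icc a b))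
    (hslope : ∀ x ∈ Ico a b, ∀ ρ < K, ∀ᶠ z in 𝓝[>] x, ρ < slope g x z) :
    K * (b - a) ≤ g b - g a := by
  have := image_le_of_liminf_slope_right_le_deriv_boundary (f := -g) (B' := fun _ => -K)
    (B := fun x => -g a - K * (x - a)) hg.neg (by simp) (by fun_prop)
    (fun x _ => ((hasDerivAt_id x).sub_const a |>.const_mul K |>.const_sub _
      |>.hasDerivWithinAt).congr_deriv (by ring))
    (fun x hx ρ hρ => ((hslope x hx (-ρ) (by linarith)).mono fun z hz => by
      rw [slope_neg_fun, Pi.neg_apply, Pi.neg_apply]; linarith).frequently)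
    (right_mem_Icc.2 hab)
  simp only [Pi.neg_apply] at this
  linarith

section RpowComparison

variable {f f' : ℝ → ℝ} {a b C p : ℝ}

theorem mul_div_rpow_le_sub_of_ae_le_deriv {q : ℝ} (hq : 0 ≤ q) (hC : 0 ≤ C)
    (hmono : MonotoneOn f (Icc a b)) (hint : IntervalIntegrable f' volume a b)
    (hFTC : ∀ x ∈ Icc a b, f x = f a + ∫ t in a..x, f' t)
    (hode : ∀ᵐ x ∂volume.restrict (Ioo a b), (f x / C) ^ q ≤ f' x)
    {u t : ℝ} (hu : a ≤ u) (hut : u ≤ t) (ht : t ≤ b) (hfu : 0 ≤ f u) :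
    (t - u) * (f u / C) ^ q ≤ f t - f u := by
  have huI : u ∈ Icc a b := ⟨hu, hut.trans ht⟩
  have htI : t ∈ Icc a b := ⟨hu.trans hut, ht⟩
  have hbound : (fun _ => (f u / C) ^ q) ≤ᵐ[volume.restrict (Icc u t)] f' := by
    rw [Measure.restrict_congr_set Ioo_ae_eq_Icc.symm]
    filter_upwards [ae_restrict_of_ae_restrict_of_subset (Ioo_subset_Ioo hu ht) hode,
      ae_restrict_mem measurableSet_Ioo] with v hv hvI
    have hfv : f u ≤ f v := hmono huI ⟨hu.trans hvI.1.le, hvI.2.le.trans ht⟩ hvI.1.le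
    exact (Real.rpow_le_rpow (div_nonneg hfu hC) (div_le_div_of_nonneg_right hfv hC)
      hq).trans hv
  have hint' : IntervalIntegrable f' volume u t :=
    hint.mono_set (uIcc_subset_uIcc (Icc_subset_uIcc huI) (Icc_subset_uIcc htI))
  calc (t - u) * (f u / C) ^ q = ∫ _ in u..t, (f u / C) ^ q := by simp
    _ ≤ ∫ v in u..t, f' v :=
      intervalIntegral.integral_mono_ae_restrict hut intervalIntegrable_const hint' hbound
    _ = f t - f u := (sub_eq_integral_of_eq_add_integral hint hFTC huI htI).symm

theorem mul_rpow_mul_div_rpow_le_slope (hC : 0 < C) (hp0 : 0 ≤ p) (hp1 : p ≤ 1)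
    (hmono : MonotoneOn f (Icc a b)) (hint : IntervalIntegrable f' volume a b)
    (hFTC : ∀ x ∈ Icc a b, f x = f a + ∫ t in a..x, f' t)
    (hode : ∀ᵐ x ∂volume.restrict (Ioo a b), (f x / C) ^ (1 - p) ≤ f' x)
    {u t : ℝ} (hu : a ≤ u) (hut : u < t) (ht : t ≤ b) (hfu : 0 < f u) :
    p * C ^ (p - 1) * (f u / f t) ^ (1 - p) ≤ slope (fun x => f x ^ p) u t := by
  have hft : 0 < f t := hfu.trans_le (hmono ⟨hu, hut.le.trans ht⟩ ⟨hu.trans hut.le, ht⟩ hut.le)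
  have hinc := mul_div_rpow_le_sub_of_ae_le_deriv (by linarith) hC.le hmono hint hFTC hode
    hu hut.le ht hfu.le
  have hconc := mul_rpow_sub_one_mul_sub_le_rpow_sub_rpow hfu.le hft hp0 hp1
  have hpow (x : ℝ) (hx : 0 < x) : x ^ (p - 1) = (x ^ (1 - p))⁻¹ := by
    rw [← Real.rpow_neg hx.le, neg_sub]
  rw [slope_def_field, le_div_iff₀ (sub_pos.2 hut)]
  calc p * C ^ (p - 1) * (f u / f t) ^ (1 - p) * (t - u)
      = p * f t ^ (p - 1) * ((t - u) * (f u / C) ^ (1 - p)) := by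
        rw [Real.div_rpow hfu.le hft.le, Real.div_rpow hfu.le hC.le, hpow C hC, hpow (f t) hft]
        ring
    _ ≤ p * f t ^ (p - 1) * (f t - f u) := by gcongr
    _ ≤ f t ^ p - f u ^ p := hconc

theorem mul_sub_le_rpow_sub_rpow_of_ae_le_deriv (hC : 0 < C) (hp0 : 0 ≤ p) (hp1 : p ≤ 1)
    (hmono : MonotoneOn f (Icc a b)) (hint : IntervalIntegrable f' volume a b)
    (hFTC : ∀ x ∈ Icc a b, f x = f a + ∫ t in a..x, f' t)
    (hode : ∀ᵐ x ∂volume.restrict (Ioo a b), (f x / C) ^ (1 - p) ≤ f' x)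
    {s t : ℝ} (hs : a ≤ s) (hst : s ≤ t) (ht : t ≤ b) (hfs : 0 < f s) :
    p * C ^ (p - 1) * (t - s) ≤ f t ^ p - f s ^ p := by
  have hcont : ContinuousOn f (Icc s t) :=
    (continuousOn_of_eq_add_integral hint (hs.trans (hst.trans ht)) hFTC).mono
      (Icc_subset_Icc hs ht)
  have hfpos : ∀ x ∈ Icc s t, 0 < f x := fun x hx =>
    hfs.trans_le (hmono ⟨hs, hst.trans ht⟩ ⟨hs.trans hx.1, hx.2.trans ht⟩ hx.1)
  refine mul_sub_le_sub_of_lt_slope hst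
    (hcont.rpow_const fun x hx => Or.inl (hfpos x hx).ne') fun x hx ρ hρ => ?_
  have hxI : x ∈ Icc s t := Ico_subset_Icc_self hx
  have hratio : Tendsto (fun z => p * C ^ (p - 1) * (f x / f z) ^ (1 - p)) (𝓝[>] x)
      (𝓝 (p * C ^ (p - 1))) := by
    have hcx : ContinuousWithinAt f (Ioi x) x :=
      (hcont x hxI).mono_of_mem_nhdsWithin <| mem_of_superset (Ioc_mem_nhdsGT hx.2)
        (Ioc_subset_Icc_self.trans (Icc_subset_Icc_left hx.1))
    have : ContinuousWithinAt (fun z => p * C ^ (p - 1) * (f x / f z) ^ (1 - p)) (Ioi x) x :=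
      ((continuousWithinAt_const.div hcx (hfpos x hxI).ne').rpow_const
        (Or.inr (sub_nonneg.2 hp1))).const_mul _
    simpa [div_self (hfpos x hxI).ne'] using this.tendsto
  filter_upwards [hratio.eventually (lt_mem_nhds hρ), Ioc_mem_nhdsGT hx.2] with z hz hzI
  exact hz.trans_le (mul_rpow_mul_div_rpow_le_slope hC hp0 hp1 hmono hint hFTC hode
    (hs.trans hx.1) hzI.1 (hzI.2.trans ht) (hfpos x hxI))

end RpowComparison

theorem stmt0_general (n : ℕ) (hn : 2 ≤ n) (lam R C : ℝ) (hlR : lam < R)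
    (hC : 0 < C) (f f' : ℝ → ℝ)
    (hmono : MonotoneOn f (Icc lam R))
    (hpos : ∀ r ∈ Ioc lam R, 0 < f r)
    (hint : ∀ x ∈ Icc lam R, IntervalIntegrable f' volume lam x)
    (hFTC : ∀ x ∈ Icc lam R, f x = f lam + ∫ t in lam..x, f' t)
    (hode : ∀ᵐ r ∂(volume.restrict (Ioo lam R)),
      f r ≤ C * (f' r) ^ ((n : ℝ) / ((n : ℝ) - 1))) :
    ∀ r ∈ Icc lam R,
      (C ^ (-(((n : ℝ) - 1)) / (n : ℝ)) / (n : ℝ)) ^ n * (r - lam) ^ n ≤ f r := by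
  set K : ℝ := C ^ (-(((n : ℝ) - 1)) / (n : ℝ)) / n with hK
  have hn1 : (1 : ℝ) < n := by exact_mod_cast hn
  have hintR := hint R ⟨hlR.le, le_rfl⟩
  have hderiv : ∀ᵐ r ∂(volume.restrict (Ioo lam R)), (f r / C) ^ (1 - (n : ℝ)⁻¹) ≤ f' r := by
    -- `f' ≥ 0` is needed to invert the power: `Real.rpow` is junk at negative bases.
    filter_upwards [hode, ae_nonneg_of_monotoneOn_of_eq_add_integral hmono hintR hFTC,
      ae_restrict_mem measurableSet_Ioo] with r hr hr' hrI
    have hexp : 1 - (n : ℝ)⁻¹ = ((n : ℝ) / (n - 1))⁻¹ := by field_simp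
    rw [hexp, Real.rpow_inv_le_iff_of_pos (div_nonneg (hpos r ⟨hrI.1, hrI.2.le⟩).le hC.le) hr'
      (by positivity), div_le_iff₀' hC]
    exact hr
  have hKeq : (n : ℝ)⁻¹ * C ^ ((n : ℝ)⁻¹ - 1) = K := by
    rw [hK, show (n : ℝ)⁻¹ - 1 = -((n : ℝ) - 1) / n by field_simp; ring]; ring
  have hfrom_pos : ∀ s ∈ Ioc lam R, ∀ r ∈ Icc s R, (K * (r - s)) ^ n ≤ f r := by
    intro s hs r hr
    have h := mul_sub_le_rpow_sub_rpow_of_ae_le_deriv hC (by positivity)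
      (inv_le_one_of_one_le₀ hn1.le) hmono hintR hFTC hderiv hs.1.le hr.1 hr.2 (hpos s hs)
    rw [hKeq] at h
    calc (K * (r - s)) ^ n ≤ (f r ^ (n : ℝ)⁻¹) ^ n :=
          pow_le_pow_left₀ (by have := sub_nonneg.2 hr.1; positivity)
            (h.trans (sub_le_self _ (Real.rpow_nonneg (hpos s hs).le _))) n
      _ = f r := Real.rpow_inv_natCast_pow (hpos r ⟨hs.1.trans_le hr.1, hr.2⟩).le (by omega)
  have hIoc : ∀ r ∈ Ioc lam R, K ^ n * (r - lam) ^ n ≤ f r := by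
    intro r hr
    rw [← mul_pow]
    refine le_on_closure (fun s hs => hfrom_pos s ⟨hs.1, hs.2.trans hr.2⟩ r ⟨hs.2, hr.2⟩)
      (by fun_prop) continuousOn_const (?_ : lam ∈ closure (Ioc lam r))
    rw [closure_Ioc hr.1.ne]; exact left_mem_Icc.2 hr.1.le
  intro r hr
  rw [← closure_Ioc hlR.ne] at hr
  exact le_on_closure hIoc (by fun_prop)
    (by rw [closure_Ioc hlR.ne]; exact continuousOn_of_eq_add_integral hintR hlR.le hFTC) hr

/-- ODE lemma underlying the volume lower bound in the monotonicity inequality: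
if `f` is nonnegative, increasing, absolutely continuous on `[λ, R]` (expressed via
an a.e. derivative `f'` and the fundamental theorem of calculus), positive for `r > λ`,
and satisfies `f ≤ C · (f')^{n/(n-1)}` a.e., then `f r ≥ (C^{-(n-1)/n}/n)^n (r-λ)^n`. -/
theorem stmt0 (n : ℕ) (hn : 2 ≤ n) (lam R C : ℝ) (hlam : 0 ≤ lam) (hlR : lam < R)
    (hC : 0 < C) (f f' : ℝ → ℝ)
    (hmono : MonotoneOn f (Icc lam R))
    (hnonneg : ∀ r ∈ Icc lam R, 0 ≤ f r)
    (hpos : ∀ r ∈ Ioc lam R, 0 < f r)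
    (hint : ∀ x ∈ Icc lam R, IntervalIntegrable f' volume lam x)
    (hFTC : ∀ x ∈ Icc lam R, f x = f lam + ∫ t in lam..x, f' t)
    (hode : ∀ᵐ r ∂(volume.restrict (Ioo lam R)),
      f r ≤ C * (f' r) ^ ((n : ℝ) / ((n : ℝ) - 1))) :
    ∀ r ∈ Icc lam R,
      (C ^ (-(((n : ℝ) - 1)) / (n : ℝ)) / (n : ℝ)) ^ n * (r - lam) ^ n ≤ f r :=
  stmt0_general n hn lam R C hlR hC f f' hmono hpos hint hFTC hode
end

section
/- Let (X, μ) and (Y, ν) be finite measure spaces, d : X × Y → [0, ∞) a measurable symmetric function (a distance), r > 0, and suppose: (a) for every p ∈ X, ν({q ∈ Y : d(p,q) ≤ r}) ≥ a; (b) for every q ∈ Y, μ({p ∈ X : d(p,q) ≤ r}) ≤ b. Then ν({q ∈ Y : ∃ p ∈ X, d(p,q) ≤ r}) ≥ (a/b)·μ(X). -/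
open MeasureTheory ENNReal

/-! Double counting: integrate the indicator of `S = {(p, q) | d p q ≤ r}` against `μ ⊗ ν`
in both orders. Integrating over `Y` first gives at least `a μ(X)`; integrating over `X` first
gives at most `b` times the `ν`-measure of the projection of `S` to `Y`. -/

section DoubleCounting

variable {X Y : Type*} [MeasurableSpace X] [MeasurableSpace Y] {μ : Measure X} {ν : Measure Y}
  {S : Set (X × Y)}

theorem mul_measure_univ_le_prod_apply [SFinite ν] (hS : MeasurableSet S) {a : ℝ≥0∞}
    (ha : ∀ p, a ≤ ν (Prod.mk p ⁻¹' S)) : a * μ Set.univ ≤ μ.prod ν S := by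
  rw [Measure.prod_apply hS, ← lintegral_const]
  exact lintegral_mono ha

theorem prod_apply_le_mul_measure_image_snd [SFinite μ] [SFinite ν] (hS : MeasurableSet S)
    {b : ℝ≥0∞} (hb : ∀ q, μ ((·, q) ⁻¹' S) ≤ b) : μ.prod ν S ≤ b * ν (Prod.snd '' S) := by
  rw [Measure.prod_apply_symm hS]
  have hslice : ∀ q, μ ((·, q) ⁻¹' S) ≤ (Prod.snd '' S).indicator (fun _ ↦ b) q := by
    intro q
    by_cases hq : q ∈ Prod.snd '' S
    · simpa only [Set.indicator_of_mem hq] using hb q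
    · have hempty : (·, q) ⁻¹' S = ∅ :=
        Set.eq_empty_of_forall_notMem fun p hp ↦ hq ⟨(p, q), hp, rfl⟩
      simp [hempty]
  exact (lintegral_mono hslice).trans (lintegral_indicator_const_le _ b)

theorem mul_measure_univ_le_mul_measure_image_snd [SFinite μ] [SFinite ν]
    (hS : MeasurableSet S) {a b : ℝ≥0∞} (ha : ∀ p, a ≤ ν (Prod.mk p ⁻¹' S))
    (hb : ∀ q, μ ((·, q) ⁻¹' S) ≤ b) : a * μ Set.univ ≤ b * ν (Prod.snd '' S) :=
  (mul_measure_univ_le_prod_apply hS ha).trans (prod_apply_le_mul_measure_image_snd hS hb)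

end DoubleCounting

theorem ENNReal.div_mul_le_of_mul_le_mul {a b m n : ℝ≥0∞} (hb0 : b ≠ 0) (hbtop : b ≠ ⊤)
    (h : a * m ≤ b * n) : a / b * m ≤ n := by
  rw [div_eq_mul_inv, mul_right_comm, ← div_eq_mul_inv, ENNReal.div_le_iff hb0 hbtop, mul_comm n]
  exact h

theorem stmt11_general (X Y : Type*) [MeasurableSpace X] [MeasurableSpace Y]
    (μ : Measure X) (ν : Measure Y) [IsFiniteMeasure μ] [IsFiniteMeasure ν]
    (d : X → Y → ℝ) (hd : Measurable (Function.uncurry d))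
    (r : ℝ)
    (a b : ℝ≥0∞) (hb0 : b ≠ 0) (hbtop : b ≠ ⊤)
    (ha : ∀ p : X, a ≤ ν {q | d p q ≤ r})
    (hbb : ∀ q : Y, μ {p | d p q ≤ r} ≤ b) :
    (a / b) * μ Set.univ ≤ ν {q | ∃ p : X, d p q ≤ r} := by
  have hS : MeasurableSet {pq : X × Y | d pq.1 pq.2 ≤ r} := measurableSet_le hd measurable_const
  have hproj : Prod.snd '' {pq : X × Y | d pq.1 pq.2 ≤ r} = {q | ∃ p, d p q ≤ r} := by
    ext q
    simp
  refine ENNReal.div_mul_le_of_mul_le_mul hb0 hbtop ?_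
  rw [← hproj]
  exact mul_measure_univ_le_mul_measure_image_snd hS ha hbb

/-- Abstract Fubini/double-counting lemma underlying the almost-full-measure
inequality: if every `p ∈ X` has a `ν`-mass at least `a` of points of `Y` within
distance `r`, while every `q ∈ Y` sees `μ`-mass at most `b` of points of `X` within
distance `r`, then the set of points of `Y` within distance `r` of `X` has `ν`-measure
at least `(a/b) μ(X)`. -/
theorem stmt11 (X Y : Type*) [MeasurableSpace X] [MeasurableSpace Y]
    (μ : Measure X) (ν : Measure Y) [IsFiniteMeasure μ] [IsFiniteMeasure ν]
    (d : X → Y → ℝ) (hd : Measurable (Function.uncurry d))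
    (hdnn : ∀ p q, 0 ≤ d p q) (r : ℝ) (hr : 0 < r)
    (a b : ℝ≥0∞) (hb0 : b ≠ 0) (hbtop : b ≠ ⊤)
    (ha : ∀ p : X, a ≤ ν {q | d p q ≤ r})
    (hbb : ∀ q : Y, μ {p | d p q ≤ r} ≤ b) :
    (a / b) * μ Set.univ ≤ ν {q | ∃ p : X, d p q ≤ r} :=
  stmt11_general X Y μ ν d hd r a b hb0 hbtop ha hbb
end
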